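/- Let W be a measurable space, μ = μ̄_1 ⊗ ⋯ ⊗ μ̄_n a database distribution on W^n, and 𝒯⁺_{n,m} sampling with replacement: the uniform distribution on all templates τ : Fin m → Fin n. Then for every index j and all v, w ∈ W, the total variation distance between the subsampled distributions satisfies d_TV( Σ_τ 𝒯⁺_{n,m}(τ)·(SAMP_τ)_* μ_{j,v} , Σ_τ 𝒯⁺_{n,m}(τ)·(SAMP_τ)_* μ_{j,w} ) ≤ 1 − (1 − 1/n)^m, the probability that the sensitive index j is drawn at least once. -/
import Mathlib


open MeasureTheory Real
open scoped ENNReal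

noncomputable section

/-- Hockey-stick divergence / privacy curve `Δ_ε(μ,ν)`. -/
def hsDiv {A : Type*} [MeasurableSpace A] (ε : ℝ) (μ ν : Measure A) : ℝ :=
  ⨆ S : {S : Set A // MeasurableSet S}, ((μ S.1).toReal - Real.exp ε * (ν S.1).toReal)

/-- Subsampling map induced by a template. -/
def SAMP {W : Type*} {n m : ℕ} (τ : Fin m → Fin n) (x : Fin n → W) : Fin m → W :=
  fun i => x (τ i)

/-- Product measure with `j`-th factor replaced by the Dirac measure at `v`. -/
def fixEntry {W : Type*} [MeasurableSpace W] {n : ℕ} (μbar : Fin n → Measure W)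
    (j : Fin n) (v : W) : Measure (Fin n → W) :=
  Measure.pi (Function.update μbar j (Measure.dirac v))

open Classical in
/-- Sampling privacy curve `SPC^j` : conditional expectation over templates containing `j`. -/
def SPCj {W A : Type*} [MeasurableSpace W] [MeasurableSpace A] {n m : ℕ}
    (F : (Fin m → W) → A) (μbar : Fin n → Measure W)
    (𝒯 : (Fin m → Fin n) → ℝ≥0∞) (j : Fin n) (ε : ℝ) : ℝ :=
  (∑ τ : Fin m → Fin n, if j ∈ Set.range τ then (𝒯 τ).toReal *
      (⨆ v : W, ⨆ w : W, hsDiv ε (Measure.map (fun x => F (SAMP τ x)) (fixEntry μbar j v))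
        (Measure.map (fun x => F (SAMP τ x)) (fixEntry μbar j w))) else 0) /
  (∑ τ : Fin m → Fin n, if j ∈ Set.range τ then (𝒯 τ).toReal else 0)

open Classical in
/-- Uniform distribution on injective templates (sampling without replacement). -/
def uniformInj (n m : ℕ) : (Fin m → Fin n) → ℝ≥0∞ :=
  fun τ => if Function.Injective τ then
    ((Finset.univ.filter (fun σ : Fin m → Fin n => Function.Injective σ)).card : ℝ≥0∞)⁻¹ else 0

open Classical in
/-- Conditioning of a distribution on templates to an event. -/
def condDist {n m : ℕ} (𝒯 : (Fin m → Fin n) → ℝ≥0∞) (E : Set (Fin m → Fin n)) :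
    (Fin m → Fin n) → ℝ≥0∞ :=
  fun τ => if τ ∈ E then 𝒯 τ / (∑ σ : Fin m → Fin n, if σ ∈ E then 𝒯 σ else 0) else 0

/-- The increasing enumeration of a finite set of indices, as a sampling template. -/
def poissonTemplate {n : ℕ} (s : Finset (Fin n)) : Fin s.card → Fin n :=
  fun i => (s.orderIsoOfFin rfl i : Fin n)

/-- Statistical privacy curve of a query. -/
def Phi {W A : Type*} [MeasurableSpace W] [MeasurableSpace A] {k : ℕ}
    (μbar : Fin k → Measure W) (F : (Fin k → W) → A) (ε : ℝ) : ℝ :=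
  ⨆ j : Fin k, ⨆ v : W, ⨆ w : W,
    hsDiv ε (Measure.map F (fixEntry μbar j v)) (Measure.map F (fixEntry μbar j w))

/-- trade-off function -/
def tradeOff {A : Type*} [MeasurableSpace A] (P Q : Measure A) (α : ℝ) : ℝ :=
  sInf { y | ∃ S : Set A, MeasurableSet S ∧ (P Sᶜ).toReal ≤ α ∧ y = (Q S).toReal }

/-- total variation distance -/
def tvDist {A : Type*} [MeasurableSpace A] (μ ν : Measure A) : ℝ :=
  ⨆ S : {S : Set A // MeasurableSet S}, |(μ S.1).toReal - (ν S.1).toReal|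

/-- support of a measure -/
def msupport {X : Type*} [TopologicalSpace X] [MeasurableSpace X] (μ : Measure X) : Set X :=
  {x | ∀ U : Set X, IsOpen U → x ∈ U → 0 < μ U}

/-- τ ≈_j σ -/
def ApproxAt {n m : ℕ} (j : Fin n) (τ σ : Fin m → Fin n) : Prop :=
  ∀ i, (τ i ≠ j → σ i = τ i) ∧ (τ i = j → σ i ≠ j)

/-- F-samplable -/
def FSamplable {W : Type*} [MeasurableSpace W] {n m : ℕ}
    (μbar : Fin n → Measure W) (F : (Fin m → W) → ℝ) : Prop :=
  ∀ (τ σ : Fin m → Fin n) (j : Fin n) (v w : W) (ε : ℝ), 0 ≤ ε →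
    ∃ S : Set ℝ, ((∃ a, S = Set.Iic a) ∨ (∃ a, S = Set.Ici a) ∨ S = ∅) ∧
      ((Measure.map (fun x => F (SAMP τ x)) (fixEntry μbar j v)) S).toReal -
        Real.exp ε * ((Measure.map (fun x => F (SAMP σ x)) (fixEntry μbar j w)) S).toReal =
      hsDiv ε (Measure.map (fun x => F (SAMP τ x)) (fixEntry μbar j v))
        (Measure.map (fun x => F (SAMP σ x)) (fixEntry μbar j w))

lemma measurable_SAMP {W : Type*} [MeasurableSpace W] {n m : ℕ} (τ : Fin m → Fin n) :
    Measurable (SAMP (W := W) τ) :=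
  measurable_pi_lambda _ fun i => measurable_pi_apply (τ i)

lemma measurable_updateAt {W : Type*} [MeasurableSpace W] {n : ℕ} (j : Fin n) (v : W) :
    Measurable (fun x : Fin n → W => Function.update x j v) := by
  apply measurable_pi_lambda
  intro i
  rcases eq_or_ne i j with rfl | h
  · simp only [Function.update_self]; exact measurable_const
  · simp only [Function.update_of_ne h]; exact measurable_pi_apply i

instance instProbUpdate {W : Type*} [MeasurableSpace W] {n : ℕ} (μbar : Fin n → Measure W)
    [hμ : ∀ i, IsProbabilityMeasure (μbar i)] (j : Fin n) (v : W) (i : Fin n) :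
    IsProbabilityMeasure (Function.update μbar j (Measure.dirac v) i) := by
  rcases eq_or_ne i j with rfl | h
  · rw [Function.update_self]; infer_instance
  · rw [Function.update_of_ne h]; exact hμ i

lemma fixEntry_eq_map {W : Type*} [MeasurableSpace W] {n : ℕ} (μbar : Fin n → Measure W)
    (hμ : ∀ i, IsProbabilityMeasure (μbar i)) (j : Fin n) (v : W) :
    fixEntry μbar j v = Measure.map (fun x => Function.update x j v) (Measure.pi μbar) := by
  haveI := hμ
  refine Measure.pi_eq (μ := Function.update μbar j (Measure.dirac v)) fun s hs => ?_
  rw [Measure.map_apply (measurable_updateAt j v) (MeasurableSet.univ_pi hs)]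
  by_cases hv : v ∈ s j
  · have hpre : (fun x : Fin n → W => Function.update x j v) ⁻¹' Set.pi Set.univ s
        = Set.pi Set.univ (Function.update s j Set.univ) := by
      ext x
      simp only [Set.mem_preimage, Set.mem_pi, Set.mem_univ, true_implies]
      constructor
      · intro h i
        rcases eq_or_ne i j with rfl | hij
        · simp [Function.update_self]
        · simpa [Function.update_of_ne hij] using h i
      · intro h i
        rcases eq_or_ne i j with rfl | hij
        · simpa [Function.update_self] using hv
        · simpa [Function.update_of_ne hij] using h i
    rw [hpre, Measure.pi_pi]
    refine (Finset.prod_congr rfl fun i _ => ?_).symm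
    rcases eq_or_ne i j with rfl | hij
    · simp [Function.update_self, Measure.dirac_apply' _ (hs i), hv]
    · simp [Function.update_of_ne hij]
  · have hpre : (fun x : Fin n → W => Function.update x j v) ⁻¹' Set.pi Set.univ s = ∅ := by
      ext x
      simp only [Set.mem_preimage, Set.mem_pi, Set.mem_univ, true_implies, Set.mem_empty_iff_false,
        iff_false, not_forall]
      exact ⟨j, by simpa [Function.update_self] using hv⟩
    rw [hpre]
    have h0 : (Function.update μbar j (Measure.dirac v)) j (s j) = 0 := by
      simp [Function.update_self, Measure.dirac_apply' _ (hs j), hv]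
    rw [Finset.prod_eq_zero (Finset.mem_univ j) h0]
    simp

lemma map_SAMP_fixEntry_of_not_mem {W : Type*} [MeasurableSpace W] {n m : ℕ}
    (μbar : Fin n → Measure W) (hμ : ∀ i, IsProbabilityMeasure (μbar i))
    {j : Fin n} {τ : Fin m → Fin n} (hj : j ∉ Set.range τ) (v w : W) :
    Measure.map (SAMP τ) (fixEntry μbar j v) = Measure.map (SAMP τ) (fixEntry μbar j w) := by
  have key : ∀ u : W, Measure.map (SAMP τ) (fixEntry μbar j u)
      = Measure.map (SAMP τ) (Measure.pi μbar) := by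
    intro u
    rw [fixEntry_eq_map μbar hμ j u,
      Measure.map_map (measurable_SAMP τ) (measurable_updateAt j u)]
    congr 1
    funext x
    funext i
    exact Function.update_of_ne (fun h => hj ⟨i, h⟩) _ _
  rw [key v, key w]

open Classical in
lemma card_filter_not_mem_range (n m : ℕ) (j : Fin n) :
    (Finset.univ.filter (fun τ : Fin m → Fin n => j ∉ Set.range τ)).card = (n - 1) ^ m := by
  rw [← Fintype.card_subtype]
  have e1 : {τ : Fin m → Fin n // j ∉ Set.range τ} ≃ (Fin m → {k : Fin n // k ≠ j}) :=
    (Equiv.subtypeEquivRight (fun τ => by simp [Set.mem_range, eq_comm])).trans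
      (Equiv.subtypePiEquivPi (p := fun _ k => k ≠ j))
  rw [Fintype.card_congr e1, Fintype.card_pi]
  have hcard : Fintype.card {k : Fin n // k ≠ j} = n - 1 := by
    simp only [Ne]
    rw [Fintype.card_subtype_compl, Fintype.card_subtype_eq, Fintype.card_fin]
  simp [hcard]

/-- for sampling with replacement, subsampled distributions that differ
only in entry `j` are at total variation distance at most `1 − (1 − 1/n)^m`. -/
theorem tvDist_subsample_with_replacement_le
    {W : Type*} [MeasurableSpace W] {n m : ℕ} (hn : 0 < n)
    (μbar : Fin n → Measure W) (hμ : ∀ i, IsProbabilityMeasure (μbar i))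
    (j : Fin n) (v w : W) :
    tvDist
      (Measure.sum fun τ : Fin m → Fin n =>
        ((n : ℝ≥0∞) ^ m)⁻¹ • Measure.map (SAMP τ) (fixEntry μbar j v))
      (Measure.sum fun τ : Fin m → Fin n =>
        ((n : ℝ≥0∞) ^ m)⁻¹ • Measure.map (SAMP τ) (fixEntry μbar j w))
      ≤ 1 - (1 - 1 / (n : ℝ)) ^ m := by
  classical
  haveI := hμ
  set c : ℝ≥0∞ := ((n : ℝ≥0∞) ^ m)⁻¹ with hc
  have hn0 : ((n : ℝ≥0∞)) ≠ 0 := by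
    simp [Nat.cast_ne_zero, hn.ne']
  have hc_ne_top : c ≠ ∞ := by
    simp [hc, ENNReal.inv_ne_top, pow_ne_zero, hn0]
  have hnR : (0 : ℝ) < (n : ℝ) := by exact_mod_cast hn
  have hcr : c.toReal = (((n : ℝ)) ^ m)⁻¹ := by
    rw [hc, ENNReal.toReal_inv, ENNReal.toReal_pow, ENNReal.toReal_natCast]
  haveI hP : ∀ (τ : Fin m → Fin n) (u : W),
      IsProbabilityMeasure (Measure.map (SAMP τ) (fixEntry μbar j u)) := by
    intro τ u
    haveI : IsProbabilityMeasure (fixEntry μbar j u) := by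
      unfold fixEntry; infer_instance
    exact Measure.isProbabilityMeasure_map (measurable_SAMP τ).aemeasurable
  haveI : Nonempty {S : Set (Fin m → W) // MeasurableSet S} := ⟨⟨∅, MeasurableSet.empty⟩⟩
  rw [tvDist]
  apply ciSup_le
  intro S
  set p : (Fin m → Fin n) → ℝ≥0∞ := fun τ => Measure.map (SAMP τ) (fixEntry μbar j v) S.1 with hp
  set q : (Fin m → Fin n) → ℝ≥0∞ := fun τ => Measure.map (SAMP τ) (fixEntry μbar j w) S.1 with hq
  have hp1 : ∀ τ, p τ ≤ 1 := fun τ => prob_le_one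
  have hq1 : ∀ τ, q τ ≤ 1 := fun τ => prob_le_one
  have hsum : ∀ u : W,
      ((Measure.sum fun τ : Fin m → Fin n =>
        c • Measure.map (SAMP τ) (fixEntry μbar j u)) S.1).toReal
      = ∑ τ : Fin m → Fin n, c.toReal * ((Measure.map (SAMP τ) (fixEntry μbar j u)) S.1).toReal := by
    intro u
    haveI := hP
    rw [Measure.sum_apply _ S.2, tsum_fintype]
    rw [ENNReal.toReal_sum]
    · refine Finset.sum_congr rfl fun τ _ => ?_
      rw [Measure.smul_apply, smul_eq_mul, ENNReal.toReal_mul]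
    · intro τ _
      rw [Measure.smul_apply, smul_eq_mul]
      exact ENNReal.mul_ne_top hc_ne_top (measure_ne_top _ _)
  rw [hsum v, hsum w]
  have hdiff : (∑ τ : Fin m → Fin n, c.toReal * (p τ).toReal)
      - (∑ τ : Fin m → Fin n, c.toReal * (q τ).toReal)
      = ∑ τ : Fin m → Fin n, c.toReal * ((p τ).toReal - (q τ).toReal) := by
    rw [← Finset.sum_sub_distrib]
    exact Finset.sum_congr rfl fun τ _ => (mul_sub _ _ _).symm
  rw [hdiff]
  have step1 : |∑ τ : Fin m → Fin n, c.toReal * ((p τ).toReal - (q τ).toReal)|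
      ≤ ∑ τ : Fin m → Fin n, (if j ∈ Set.range τ then c.toReal else 0) := by
    refine (Finset.abs_sum_le_sum_abs _ _).trans (Finset.sum_le_sum fun τ _ => ?_)
    by_cases hjτ : j ∈ Set.range τ
    · rw [if_pos hjτ, abs_mul, abs_of_nonneg ENNReal.toReal_nonneg]
      have h1 : |(p τ).toReal - (q τ).toReal| ≤ 1 := by
        rw [abs_sub_le_iff]
        constructor
        · have := ENNReal.toReal_mono ENNReal.one_ne_top (hp1 τ)
          simp only [ENNReal.toReal_one] at this
          linarith [ENNReal.toReal_nonneg (a := q τ)]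
        · have := ENNReal.toReal_mono ENNReal.one_ne_top (hq1 τ)
          simp only [ENNReal.toReal_one] at this
          linarith [ENNReal.toReal_nonneg (a := p τ)]
      calc c.toReal * |(p τ).toReal - (q τ).toReal| ≤ c.toReal * 1 :=
            mul_le_mul_of_nonneg_left h1 ENNReal.toReal_nonneg
        _ = c.toReal := mul_one _
    · rw [if_neg hjτ]
      have : p τ = q τ := by
        rw [hp, hq]
        simp only
        rw [map_SAMP_fixEntry_of_not_mem μbar hμ hjτ v w]
      simp [this]
  refine step1.trans ?_
  rw [Finset.sum_ite, Finset.sum_const, Finset.sum_const_zero, add_zero, nsmul_eq_mul]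
  have htot : (Finset.univ.filter (fun τ : Fin m → Fin n => j ∈ Set.range τ)).card
      + (Finset.univ.filter (fun τ : Fin m → Fin n => j ∉ Set.range τ)).card = n ^ m := by
    rw [Finset.card_filter_add_card_filter_not, Finset.card_univ, Fintype.card_fun,
      Fintype.card_fin, Fintype.card_fin]
  have hNc := card_filter_not_mem_range n m j
  have hle : (n - 1) ^ m ≤ n ^ m := Nat.pow_le_pow_left (Nat.sub_le n 1) m
  have hN : (Finset.univ.filter (fun τ : Fin m → Fin n => j ∈ Set.range τ)).card
      = n ^ m - (n - 1) ^ m := by omega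
  rw [hN, hcr]
  apply le_of_eq
  have hcast : ((n ^ m - (n - 1) ^ m : ℕ) : ℝ) = (n : ℝ) ^ m - ((n : ℝ) - 1) ^ m := by
    rw [Nat.cast_sub hle]
    push_cast [Nat.cast_sub hn]
    ring
  rw [hcast]
  have h1 : (1 - 1 / (n : ℝ)) = ((n : ℝ) - 1) / (n : ℝ) := by field_simp
  rw [h1, div_pow]
  field_simp

end
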